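/- arXiv:2304.11012 — 3 statements merged into one kernel-verified Lean document; each statement's English description precedes it below -/
import Mathlib

section
/- The sum over k ≥ 2 of k·⌈log₂ k⌉/(k!·e) converges and is less than 1 (in fact at most 0.9154). -/
/-!
Split the series after thirteen terms. The first thirteen are summed exactly, giving
`3103789 / 1247400`. For `k ≥ 13`, `k ⌈log₂ k⌉ ≤ k² ≤ 2 ^ k` and `k! ≥ 13! · 14 ^ (k - 13)`, so the
tail is dominated by a geometric series of ratio `1 / 7` and contributes less than `2 · 10⁻⁶`.
Dividing by `e > 2.7182818283` gives a value below `0.91537`.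
-/

open Finset Nat

section GeometricTail

variable {u : ℕ → ℝ} {N : ℕ} {c r : ℝ}

theorem summable_of_tail_le_geometric (hu : ∀ k, 0 ≤ u k) (hr₀ : 0 ≤ r) (hr₁ : r < 1)
    (htail : ∀ n, u (n + N) ≤ c * r ^ n) : Summable u :=
  (summable_nat_add_iff N).1 <| Summable.of_nonneg_of_le (fun _ ↦ hu _) htail
    ((summable_geometric_of_lt_one hr₀ hr₁).mul_left c)

theorem tsum_le_sum_range_add_of_tail_le_geometric (hu : ∀ k, 0 ≤ u k) (hr₀ : 0 ≤ r)
    (hr₁ : r < 1) (htail : ∀ n, u (n + N) ≤ c * r ^ n) :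
    ∑' k, u k ≤ ∑ k ∈ range N, u k + c / (1 - r) := by
  have hsum := summable_of_tail_le_geometric hu hr₀ hr₁ htail
  rw [← hsum.sum_add_tsum_nat_add N]
  gcongr
  calc ∑' n, u (n + N) ≤ ∑' n, c * r ^ n :=
        Summable.tsum_le_tsum htail ((summable_nat_add_iff N).2 hsum)
          ((summable_geometric_of_lt_one hr₀ hr₁).mul_left c)
    _ = c / (1 - r) := by rw [tsum_mul_left, tsum_geometric_of_lt_one hr₀ hr₁, div_eq_mul_inv]

end GeometricTail

theorem Nat.sq_le_two_pow {k : ℕ} (hk : 4 ≤ k) : k ^ 2 ≤ 2 ^ k := by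
  induction k, hk using Nat.le_induction with
  | base => norm_num
  | succ k hk ih =>
    calc (k + 1) ^ 2 ≤ 2 * k ^ 2 := by nlinarith
      _ ≤ 2 * 2 ^ k := by omega
      _ = 2 ^ (k + 1) := by ring

theorem Nat.clog_two_le_self (k : ℕ) : Nat.clog 2 k ≤ k :=
  Nat.clog_le_of_le_pow Nat.lt_two_pow_self.le

-- `e` times the contribution of buckets of size `k`, whose Poisson(1) probability is `1 / (e k!)`.
noncomputable def rankBitsTerm (k : ℕ) : ℝ := ((k * Nat.clog 2 k : ℕ) : ℝ) / k !

theorem rankBitsTerm_nonneg (k : ℕ) : 0 ≤ rankBitsTerm k := by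
  unfold rankBitsTerm; positivity

theorem sum_range_thirteen_rankBitsTerm :
    ∑ k ∈ range 13, rankBitsTerm k = 3103789 / 1247400 := by
  simp only [sum_range_succ, sum_range_zero, rankBitsTerm]
  norm_num [Nat.clog, Nat.factorial]

theorem rankBitsTerm_add_thirteen_le (n : ℕ) :
    rankBitsTerm (n + 13) ≤ 2 ^ 13 / (13 ! : ℝ) * (1 / 7) ^ n := by
  have hnum : (n + 13) * Nat.clog 2 (n + 13) ≤ 2 ^ 13 * 2 ^ n :=
    calc (n + 13) * Nat.clog 2 (n + 13) ≤ (n + 13) ^ 2 := by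
          rw [sq]; exact Nat.mul_le_mul_left _ (Nat.clog_two_le_self _)
      _ ≤ 2 ^ (n + 13) := Nat.sq_le_two_pow (by omega)
      _ = 2 ^ 13 * 2 ^ n := by ring
  have hden : 13 ! * 14 ^ n ≤ (n + 13) ! := by
    simpa [add_comm] using @Nat.factorial_mul_pow_le_factorial 13 n
  have hnum' : (((n + 13) * Nat.clog 2 (n + 13) : ℕ) : ℝ) ≤ 2 ^ 13 * 2 ^ n := by
    exact_mod_cast hnum
  have hden' : (13 ! : ℝ) * 14 ^ n ≤ (n + 13) ! := by exact_mod_cast hden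
  calc rankBitsTerm (n + 13) ≤ 2 ^ 13 * 2 ^ n / (13 ! * 14 ^ n) := by
        unfold rankBitsTerm
        gcongr
    _ = 2 ^ 13 / (13 ! : ℝ) * (1 / 7) ^ n := by
        rw [show (14 : ℝ) ^ n = 2 ^ n * 7 ^ n by rw [← mul_pow]; norm_num, one_div_pow]
        field_simp

theorem summable_rankBitsTerm : Summable rankBitsTerm :=
  summable_of_tail_le_geometric rankBitsTerm_nonneg (by norm_num) (by norm_num)
    rankBitsTerm_add_thirteen_le

theorem tsum_rankBitsTerm_le :
    ∑' k, rankBitsTerm k ≤ 3103789 / 1247400 + 2 ^ 13 / 13 ! / (1 - 1 / 7) :=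
  sum_range_thirteen_rankBitsTerm ▸ tsum_le_sum_range_add_of_tail_le_geometric
    rankBitsTerm_nonneg (by norm_num) (by norm_num) rankBitsTerm_add_thirteen_le

/-- The sum over k ≥ 2 of k·⌈log₂ k⌉/(k!·e) converges, is at most 0.9154,
and in particular is less than 1. -/
theorem stmt0 :
    Summable (fun k : ℕ =>
      if 2 ≤ k then ((k * Nat.clog 2 k : ℕ) : ℝ) / (Nat.factorial k * Real.exp 1) else 0) ∧
    (∑' k : ℕ,
      if 2 ≤ k then ((k * Nat.clog 2 k : ℕ) : ℝ) / (Nat.factorial k * Real.exp 1) else 0)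
        ≤ 0.9154 ∧
    (∑' k : ℕ,
      if 2 ≤ k then ((k * Nat.clog 2 k : ℕ) : ℝ) / (Nat.factorial k * Real.exp 1) else 0)
        < 1 := by
  have hterm : (fun k : ℕ =>
      if 2 ≤ k then ((k * Nat.clog 2 k : ℕ) : ℝ) / (Nat.factorial k * Real.exp 1) else 0) =
      fun k ↦ rankBitsTerm k / Real.exp 1 := by
    funext k
    split_ifs with hk
    · rw [rankBitsTerm, div_div]
    · interval_cases k <;> simp [rankBitsTerm]
  have hbound : (∑' k, rankBitsTerm k) / Real.exp 1 ≤ 0.9154 := by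
    rw [div_le_iff₀ (Real.exp_pos 1)]
    calc ∑' k, rankBitsTerm k ≤ 3103789 / 1247400 + 2 ^ 13 / 13 ! / (1 - 1 / 7) :=
          tsum_rankBitsTerm_le
      _ ≤ 0.9154 * 2.7182818283 := by norm_num [Nat.factorial]
      _ ≤ 0.9154 * Real.exp 1 := by gcongr; exact Real.exp_one_gt_d9.le
  rw [hterm, tsum_div_const]
  exact ⟨summable_rankBitsTerm.div_const _, hbound, hbound.trans_lt (by norm_num)⟩
end

section
/- If n balls are thrown independently and uniformly at random into n bins, then the expected total value of Σ_i (X_i · ⌈log₂ X_i⌉), where X_i is the number of balls in bin i and terms with X_i ≤ 1 contribute 0, is at most C·n for an absolute constant C (e.g., C = 1). -/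
/-!
Since `⌈log₂ k⌉ ≤ k - 1`, the quantity `∑ X_b ⌈log₂ X_b⌉` is at most `∑ X_b (X_b - 1)`, the number
of ordered pairs of distinct balls landing in the same bin. A fixed pair collides in exactly a
`1 / #bins` fraction of all assignments, so with `m` balls the expectation is at most
`m (m - 1) / #bins`, which is `n - 1` for `n` balls and `n` bins.
-/

open Finset

theorem Nat.clog_two_le_sub_one (k : ℕ) : Nat.clog 2 k ≤ k - 1 :=
  Nat.clog_le_of_le_pow (by have := Nat.lt_two_pow_self (n := k - 1); omega)

section BallsIntoBins

variable {α β : Type*} [Fintype α] [Fintype β] [DecidableEq β]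

def binLoad (ω : α → β) (b : β) : ℕ := #{a | ω a = b}

theorem card_filter_apply_eq_apply [DecidableEq α] {a a' : α} (h : a ≠ a') :
    #{ω : α → β | ω a = ω a'} = Fintype.card β ^ (Fintype.card α - 1) := by
  let e : {ω : α → β // ω a = ω a'} ≃ ({i : α // i ≠ a'} → β) :=
    { toFun := fun ω i => ω.1 i
      invFun := fun g => ⟨fun i => if hi : i = a' then g ⟨a, h⟩ else g ⟨i, hi⟩, by simp [h]⟩
      left_inv := fun ω => by
        ext i
        by_cases hi : i = a'
        · simp [hi, ← ω.2]
        · simp [hi]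
      right_inv := fun g => by
        ext i
        simp [i.2] }
  rw [← Fintype.card_subtype, Fintype.card_congr e, Fintype.card_fun, Fintype.card_subtype_compl,
    Fintype.card_subtype_eq]

theorem sum_binLoad_mul_sub_one (ω : α → β) :
    ∑ b, binLoad ω b * (binLoad ω b - 1) = #{p ∈ univ.offDiag | ω p.1 = ω p.2} := by
  have hfiber (b : β) :
      {p ∈ {p ∈ (univ : Finset α).offDiag | ω p.1 = ω p.2} | ω p.1 = b} =
      ({a | ω a = b} : Finset α).offDiag := by
    ext ⟨x, y⟩
    simp only [mem_filter, mem_offDiag, mem_univ, true_and]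
    grind
  rw [card_eq_sum_card_fiberwise (f := fun p => ω p.1) (t := univ)
    fun _ _ => mem_coe.2 (mem_univ _)]
  simp only [hfiber, offDiag_card, binLoad, Nat.mul_sub_one]

theorem sum_card_collisions [DecidableEq α] :
    ∑ ω : α → β, #{p ∈ univ.offDiag | ω p.1 = ω p.2} =
      Fintype.card α * (Fintype.card α - 1) * Fintype.card β ^ (Fintype.card α - 1) := by
  simp only [card_filter]
  rw [sum_comm]
  have hpair (p) (hp : p ∈ (univ : Finset α).offDiag) :
      ∑ ω : α → β, (if ω p.1 = ω p.2 then 1 else 0) = Fintype.card β ^ (Fintype.card α - 1) := by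
    rw [← card_filter, card_filter_apply_eq_apply (mem_offDiag.1 hp).2.2]
  rw [sum_congr rfl hpair, sum_const, offDiag_card, smul_eq_mul, card_univ, Nat.mul_sub_one]

theorem sum_sum_binLoad_mul_clog_le [DecidableEq α] :
    ∑ ω : α → β, ∑ b, binLoad ω b * Nat.clog 2 (binLoad ω b) ≤
      Fintype.card α * (Fintype.card α - 1) * Fintype.card β ^ (Fintype.card α - 1) :=
  calc ∑ ω : α → β, ∑ b, binLoad ω b * Nat.clog 2 (binLoad ω b)
      ≤ ∑ ω : α → β, ∑ b, binLoad ω b * (binLoad ω b - 1) := by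
        gcongr with ω _ b _
        exact Nat.clog_two_le_sub_one _
    _ = ∑ ω : α → β, #{p ∈ univ.offDiag | ω p.1 = ω p.2} := by
        simp only [sum_binLoad_mul_sub_one]
    _ = _ := sum_card_collisions

end BallsIntoBins

/-- Balls into bins: n balls thrown independently and uniformly at random into n bins.
The expected total value of Σᵢ Xᵢ·⌈log₂ Xᵢ⌉ (terms with Xᵢ ≤ 1 contribute 0, automatic
since ⌈log₂ 0⌉ = ⌈log₂ 1⌉ = 0) is at most C·n with C = 1. -/
theorem stmt1 (n : ℕ) (hn : 1 ≤ n) :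
    (1 / (n : ℝ) ^ n) * ∑ ω : Fin n → Fin n, ∑ i : Fin n,
      (((Finset.univ.filter (fun j => ω j = i)).card *
        Nat.clog 2 ((Finset.univ.filter (fun j => ω j = i)).card) : ℕ) : ℝ)
      ≤ 1 * n := by
  have hbound : ∑ ω : Fin n → Fin n, ∑ i, binLoad ω i * Nat.clog 2 (binLoad ω i) ≤ n * n ^ n :=
    calc _ ≤ n * (n - 1) * n ^ (n - 1) := by
          simpa only [Fintype.card_fin] using sum_sum_binLoad_mul_clog_le (α := Fin n) (β := Fin n)
      _ ≤ n * n * n ^ (n - 1) := by gcongr; omega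
      _ = n * n ^ n := by rw [mul_assoc, ← pow_succ', Nat.sub_add_cancel hn]
  have hpos : (0 : ℝ) < (n : ℝ) ^ n := by positivity
  rw [one_div, one_mul, inv_mul_le_iff₀ hpos, mul_comm, ← Nat.cast_pow, ← Nat.cast_mul]
  exact_mod_cast hbound
end

section
/- For a binomially distributed random variable X ~ Bin(n, 1/n) and any bounded function g: ℕ → ℝ≥0 with g(0) = g(1) = 0 and g(k) ≤ k², the expectation E[g(X)] converges as n → ∞ to Σ_k g(k)/(k!·e), the corresponding expectation under Poisson(1). -/
/-!
The binomial weight `C(n,k) (r/n)^k (1 - r/n)^(n-k)` tends to the Poisson weight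
`e^{-r} r^k / k!` and, once `n ≥ r`, is bounded by `r^k / k!`. For `g` integrable against
Poisson(`r`) the series `∑ r^k / k! |g k|` converges, so Tannery's theorem (dominated convergence
for series) lets the limit pass through the sum. Functions of polynomial growth are integrable
because `k^m ≤ (2^m)^k`.
-/

open Filter Topology Finset MeasureTheory ProbabilityTheory Real
open scoped Nat NNReal

lemma choose_mul_div_pow_le {r : ℝ} (hr : 0 ≤ r) (n k : ℕ) :
    (n.choose k : ℝ) * (r / n) ^ k ≤ r ^ k / k ! := by
  rcases Nat.eq_zero_or_pos n with rfl | hn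
  · rcases Nat.eq_zero_or_pos k with rfl | hk
    · simp
    · simp [Nat.choose_eq_zero_of_lt hk]
      positivity
  calc (n.choose k : ℝ) * (r / n) ^ k ≤ (n ^ k / k !) * (r / n) ^ k := by
        gcongr; exact Nat.choose_le_pow_div k n
    _ = r ^ k / k ! := by
        rw [div_mul_eq_mul_div, ← mul_pow, mul_div_cancel₀ r (by positivity)]

lemma abs_choose_mul_pow_mul_pow_le {r : ℝ} {n : ℕ} (hr : 0 ≤ r) (hrn : r ≤ n) (k : ℕ) :
    |(n.choose k : ℝ) * (r / n) ^ k * (1 - r / n) ^ (n - k)| ≤ r ^ k / k ! := by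
  have hp : r / n ≤ 1 := div_le_one_of_le₀ hrn n.cast_nonneg
  have hq : 0 ≤ 1 - r / n := sub_nonneg.2 hp
  rw [abs_of_nonneg (by positivity)]
  calc (n.choose k : ℝ) * (r / n) ^ k * (1 - r / n) ^ (n - k) ≤ r ^ k / k ! * 1 := by
        gcongr
        · exact choose_mul_div_pow_le hr n k
        · exact pow_le_one₀ hq (by linarith [div_nonneg hr n.cast_nonneg])
    _ = r ^ k / k ! := mul_one _

theorem tendsto_sum_choose_mul_integral_poissonMeasure {r : ℝ≥0} {g : ℕ → ℝ}
    (hg : Integrable g Po(r)) :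
    Tendsto (fun n : ℕ => ∑ k ∈ range (n + 1),
        (n.choose k : ℝ) * (r / n) ^ k * (1 - r / n) ^ (n - k) * g k)
      atTop (𝓝 (∫ k, g k ∂Po(r))) := by
  have hsum := (integrable_poissonMeasure_iff.1 hg).mul_left (exp r)
  have hr : Tendsto (fun n : ℕ => n * ((r : ℝ) / n)) atTop (𝓝 r) :=
    tendsto_const_nhds.congr' <| by
      filter_upwards [eventually_gt_atTop 0] with n hn
      field_simp
  rw [integral_poissonMeasure' hg]
  refine (tendsto_tsum_of_dominated_convergence hsum (fun k => ?_) ?_).congr fun n =>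
    tsum_eq_sum fun k hk => by simp [Nat.choose_eq_zero_of_lt (by simpa using hk : n < k)]
  · simpa using (tendsto_choose_mul_pow_of_tendsto_mul_atTop k hr).mul_const (g k)
  · filter_upwards [eventually_ge_atTop ⌈(r : ℝ)⌉₊] with n hn k
    have hrn : (r : ℝ) ≤ n := (Nat.le_ceil _).trans (by exact_mod_cast hn)
    calc ‖(n.choose k : ℝ) * (r / n) ^ k * (1 - r / n) ^ (n - k) * g k‖
        ≤ r ^ k / k ! * ‖g k‖ := by
          rw [norm_mul, Real.norm_eq_abs]
          gcongr
          exact abs_choose_mul_pow_mul_pow_le r.2 hrn k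
      _ = exp r * (exp (-r) * r ^ k / k ! * ‖g k‖) := by
          rw [exp_neg]; field_simp

lemma integrable_poissonMeasure_of_norm_le_pow {E : Type*} [NormedAddCommGroup E] {r : ℝ≥0}
    {g : ℕ → E} {C : ℝ} {m : ℕ} (hg : ∀ k, ‖g k‖ ≤ C * k ^ m) : Integrable g Po(r) := by
  have hC : 0 ≤ C := by simpa using (norm_nonneg _).trans (hg 1)
  have hpow (k : ℕ) : (k : ℝ) ^ m ≤ (2 ^ m) ^ k := by
    rw [← pow_mul, mul_comm, pow_mul]
    gcongr
    exact_mod_cast k.lt_two_pow_self.le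
  rw [integrable_poissonMeasure_iff]
  refine .of_nonneg_of_le (fun k => by positivity) (fun k => ?_)
    ((Real.summable_pow_div_factorial (2 ^ m * r)).mul_left (C * exp (-r)))
  calc exp (-r) * r ^ k / k ! * ‖g k‖ ≤ exp (-r) * r ^ k / k ! * (C * (2 ^ m) ^ k) := by
        gcongr
        exact (hg k).trans (by gcongr; exact hpow k)
    _ = C * exp (-r) * ((2 ^ m * r) ^ k / k !) := by ring

theorem stmt14_general (g : ℕ → ℝ)
    (hnn : ∀ k, 0 ≤ g k) (hb : ∀ k, g k ≤ (k : ℝ) ^ 2) :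
    Filter.Tendsto
      (fun n : ℕ => ∑ k ∈ Finset.range (n + 1),
        (n.choose k : ℝ) * (1 / n) ^ k * (1 - 1 / n) ^ (n - k) * g k)
      Filter.atTop
      (nhds (∑' k : ℕ, g k / (Nat.factorial k * Real.exp 1))) := by
  have hg : Integrable g Po(1) :=
    integrable_poissonMeasure_of_norm_le_pow (C := 1) (m := 2) fun k => by
      rw [Real.norm_of_nonneg (hnn k), one_mul]; exact hb k
  have h := tendsto_sum_choose_mul_integral_poissonMeasure hg
  rw [integral_poissonMeasure' hg] at h
  simp only [NNReal.coe_one, one_pow, smul_eq_mul] at h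
  rwa [tsum_congr fun k => show g k / (k ! * exp 1) = exp (-1) * 1 / k ! * g k by
    rw [exp_neg]; field_simp]

/-- Poisson approximation of the binomial: for X ~ Bin(n, 1/n) and any nonnegative
g : ℕ → ℝ with g(0) = g(1) = 0 and g(k) ≤ k², the expectation E[g(X)] converges as
n → ∞ to the Poisson(1) expectation Σ_k g(k)/(k!·e). -/
theorem stmt14 (g : ℕ → ℝ) (h0 : g 0 = 0) (h1 : g 1 = 0)
    (hnn : ∀ k, 0 ≤ g k) (hb : ∀ k, g k ≤ (k : ℝ) ^ 2) :
    Filter.Tendsto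
      (fun n : ℕ => ∑ k ∈ Finset.range (n + 1),
        (n.choose k : ℝ) * (1 / n) ^ k * (1 - 1 / n) ^ (n - k) * g k)
      Filter.atTop
      (nhds (∑' k : ℕ, g k / (Nat.factorial k * Real.exp 1))) :=
  stmt14_general g hnn hb
end
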